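/- The projection of a stable matching of the translated instance is stable: let I be an SMTI-1TM instance, I' its translated SMI instance, and M' a stable matching of I'. Then the projection M = {(m_i,w_j) : (a_i,s_j) ∈ M' or (a_i,t_j) ∈ M'} is a (weakly) stable matching of I, i.e., no pair (m_i, w_j) blocks M in I. -/

import Mathlib

/-- An instance of the stable marriage problem with ties and incomplete lists (SMTI),
with men of type `α` and women of type `β`.  Each person's preference list is
represented by a rank function: `mpref m w = none` means woman `w` is unacceptable
to man `m`, and `mpref m w = some r` means `w` is acceptable with rank `r`
(smaller rank = more preferred; equal ranks = a tie).  This encodes exactly a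
total preorder on the set of acceptable partners. -/
structure SMInst (α β : Type) where
  mpref : α → β → Option ℕ
  wpref : β → α → Option ℕ

namespace SMInst

variable {α β : Type}

/-- Woman `w` is acceptable to man `m`. -/
def mAcc (I : SMInst α β) (m : α) (w : β) : Prop := (I.mpref m w).isSome

/-- Man `m` is acceptable to woman `w`. -/
def wAcc (I : SMInst α β) (w : β) (m : α) : Prop := (I.wpref w m).isSome

/-- Man `m` strictly prefers woman `w` to woman `w'`. -/
def mPref (I : SMInst α β) (m : α) (w w' : β) : Prop :=
  ∃ r r', I.mpref m w = some r ∧ I.mpref m w' = some r' ∧ r < r'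

/-- Woman `w` strictly prefers man `m` to man `m'`. -/
def wPref (I : SMInst α β) (w : β) (m m' : α) : Prop :=
  ∃ r r', I.wpref w m = some r ∧ I.wpref w m' = some r' ∧ r < r'

/-- `M` is a matching of `I`: all pairs mutually acceptable and no person in two pairs. -/
def IsMatching (I : SMInst α β) (M : Finset (α × β)) : Prop :=
  (∀ p ∈ M, I.mAcc p.1 p.2 ∧ I.wAcc p.2 p.1) ∧
  (∀ p ∈ M, ∀ q ∈ M, p.1 = q.1 → p = q) ∧
  (∀ p ∈ M, ∀ q ∈ M, p.2 = q.2 → p = q)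

/-- Man `m` is single (unmatched) in `M`. -/
def mSingle (M : Finset (α × β)) (m : α) : Prop := ∀ w, (m, w) ∉ M

/-- Woman `w` is single (unmatched) in `M`. -/
def wSingle (M : Finset (α × β)) (w : β) : Prop := ∀ m, (m, w) ∉ M

/-- `(m, w)` blocks `M` in instance `I`. -/
def Blocks (I : SMInst α β) (M : Finset (α × β)) (m : α) (w : β) : Prop :=
  I.mAcc m w ∧ I.wAcc w m ∧
  (mSingle M m ∨ ∃ w', (m, w') ∈ M ∧ I.mPref m w w') ∧
  (wSingle M w ∨ ∃ m', (m', w) ∈ M ∧ I.wPref w m m')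

/-- `M` is a (weakly) stable matching of `I`. -/
def IsStable (I : SMInst α β) (M : Finset (α × β)) : Prop :=
  I.IsMatching M ∧ ∀ m w, ¬ I.Blocks M m w

/-- Man `m` prefers matching `M'` to matching `M`, with respect to his list in `I`:
he is matched in `M'` to an acceptable partner, and he is either single in `M`
or strictly prefers his `M'`-partner to his `M`-partner. -/
def mPrefMatching (I : SMInst α β) (m : α) (M' M : Finset (α × β)) : Prop :=
  ∃ w, (m, w) ∈ M' ∧ I.mAcc m w ∧
    (mSingle M m ∨ ∃ w', (m, w') ∈ M ∧ I.mPref m w w')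

/-- Woman `w` prefers matching `M'` to matching `M`, with respect to her list in `I`. -/
def wPrefMatching (I : SMInst α β) (w : β) (M' M : Finset (α × β)) : Prop :=
  ∃ m, (m, w) ∈ M' ∧ I.wAcc w m ∧
    (wSingle M w ∨ ∃ m', (m', w) ∈ M ∧ I.wPref w m m')

/-- `I` and `I'` differ only in man `m`'s preference list. -/
def mDiffOnly (I I' : SMInst α β) (m : α) : Prop :=
  I.wpref = I'.wpref ∧ ∀ m', m' ≠ m → I.mpref m' = I'.mpref m'

/-- `I` and `I'` differ only in woman `w`'s preference list. -/
def wDiffOnly (I I' : SMInst α β) (w : β) : Prop :=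
  I.mpref = I'.mpref ∧ ∀ w', w' ≠ w → I.wpref w' = I'.wpref w'

/-- Men's lists contain no ties. -/
def MStrict (I : SMInst α β) : Prop :=
  ∀ m w w', I.mpref m w = I.mpref m w' → I.mAcc m w → w = w'

/-- Women's lists contain no ties. -/
def WStrict (I : SMInst α β) : Prop :=
  ∀ w m m', I.wpref w m = I.wpref w m' → I.wAcc w m → m = m'

/-- `I` is an SMI instance: no ties at all (all lists strictly ordered). -/
def NoTies (I : SMInst α β) : Prop := I.MStrict ∧ I.WStrict

/-- `I` is an SMTI-1TM instance: ties may occur only in men's lists,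
i.e. women's lists are strictly ordered. -/
def OneTM (I : SMInst α β) : Prop := I.WStrict

/-- `I'` is obtained from `I` by breaking ties: same acceptable sets, and every
strict preference of `I` is preserved in `I'` (so each person's list in `I'` is a
linear extension of the corresponding total preorder in `I`). -/
def Refines (I I' : SMInst α β) : Prop :=
  (∀ m w, I.mAcc m w ↔ I'.mAcc m w) ∧
  (∀ w m, I.wAcc w m ↔ I'.wAcc w m) ∧
  (∀ m w w', I.mPref m w w' → I'.mPref m w w') ∧
  (∀ w m m', I.wPref w m m' → I'.wPref w m m')

end SMInst

namespace SMInst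

/-- The translation of an SMTI-1TM instance `I` (with men/women indexed by `Fin n`)
into an SMI instance `I'`.  Men of `I'`: `Sum.inl i` is `a_i`, `Sum.inr j` is `b_j`.
Women of `I'`: `Sum.inl j` is `s_j`, `Sum.inr j` is `t_j`.
The strict list of `a_i` replaces each tie `(w_{j_1} … w_{j_k})` (indices increasing)
of `m_i`'s list by the strict segment `t_{j_1} … t_{j_k} s_{j_1} … s_{j_k}`;
`b_j`'s list is `s_j t_j`; `s_j`'s list is `Q(w_j)` followed by `b_j`; and
`t_j`'s list is `b_j` followed by `Q(w_j)`, where `Q(w_j)` is `w_j`'s list with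
each `m_i` replaced by `a_i`. -/
def translate {n : ℕ} (I : SMInst (Fin n) (Fin n)) :
    SMInst (Fin n ⊕ Fin n) (Fin n ⊕ Fin n) where
  mpref := fun a w =>
    match a, w with
    | Sum.inl i, Sum.inl j =>
        (I.mpref i j).map fun r =>
          2 * n * r + n +
            (Finset.univ.filter fun j' : Fin n => I.mpref i j' = some r ∧ j' < j).card
    | Sum.inl i, Sum.inr j =>
        (I.mpref i j).map fun r =>
          2 * n * r +
            (Finset.univ.filter fun j' : Fin n => I.mpref i j' = some r ∧ j' < j).card
    | Sum.inr i, Sum.inl j => if j = i then some 0 else none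
    | Sum.inr i, Sum.inr j => if j = i then some 1 else none
  wpref := fun w a =>
    match w, a with
    | Sum.inl j, Sum.inl i => I.wpref j i
    | Sum.inl j, Sum.inr i =>
        if i = j then some ((Finset.univ.sup fun i' : Fin n => (I.wpref j i').getD 0) + 1)
        else none
    | Sum.inr j, Sum.inl i => (I.wpref j i).map (· + 1)
    | Sum.inr j, Sum.inr i => if i = j then some 0 else none

/-- The projection of a matching `M'` of the translated instance back to the
original instance: `M = {(m_i, w_j) : (a_i, s_j) ∈ M' ∨ (a_i, t_j) ∈ M'}`. -/
def projectM {n : ℕ} (M' : Finset ((Fin n ⊕ Fin n) × (Fin n ⊕ Fin n))) :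
    Finset (Fin n × Fin n) :=
  Finset.univ.filter fun p =>
    (Sum.inl p.1, Sum.inl p.2) ∈ M' ∨ (Sum.inl p.1, Sum.inr p.2) ∈ M'

end SMInst

/-!
The man `a_i` ranks both copies `s_j`, `t_j` of a woman `w_j` of rank `r` inside the block
`[2nr, 2n(r+1))`, so every strict preference of `m_i` survives for `a_i`, and `s_j`, `t_j` rank
the `a`-men as `w_j` ranks the men. Hence a pair `(m_i, w_j)` blocking the projection lifts to a
pair `(a_i, s_j)` or `(a_i, t_j)` blocking `M'`: if `w_j` is matched through one copy that copy is
the one, and if she is single then `t_j` is single, or matched to `b_j` and then `s_j` is single.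
The projection is a matching because `s_j` and `t_j` are never both matched to `a`-men: `b_j`
would be single, and `t_j` ranks `b_j` first.
-/

namespace SMInst

section Matching

variable {α β : Type}

def mDesires (I : SMInst α β) (M : Finset (α × β)) (m : α) (w : β) : Prop :=
  mSingle M m ∨ ∃ w', (m, w') ∈ M ∧ I.mPref m w w'

def wDesires (I : SMInst α β) (M : Finset (α × β)) (w : β) (m : α) : Prop :=
  wSingle M w ∨ ∃ m', (m', w) ∈ M ∧ I.wPref w m m'

variable {I : SMInst α β} {M : Finset (α × β)}

theorem IsMatching.eq_of_mem_left (hM : I.IsMatching M) {m : α} {w w' : β}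
    (h : (m, w) ∈ M) (h' : (m, w') ∈ M) : w = w' :=
  congrArg Prod.snd (hM.2.1 _ h _ h' rfl)

theorem IsMatching.eq_of_mem_right (hM : I.IsMatching M) {m m' : α} {w : β}
    (h : (m, w) ∈ M) (h' : (m', w) ∈ M) : m = m' :=
  congrArg Prod.fst (hM.2.2 _ h _ h' rfl)

end Matching

section Translate

variable {n : ℕ} (I : SMInst (Fin n) (Fin n))

theorem card_filter_tie_lt (i j : Fin n) (r : ℕ) :
    (Finset.univ.filter fun j' : Fin n => I.mpref i j' = some r ∧ j' < j).card < n := by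
  simpa using Finset.card_lt_univ_of_notMem (x := j) (by simp)

theorem translate_mpref_inl_mem_block {i j : Fin n} {r : ℕ} (h : I.mpref i j = some r)
    {x : Fin n ⊕ Fin n} (hx : x = Sum.inl j ∨ x = Sum.inr j) :
    ∃ k, (translate I).mpref (Sum.inl i) x = some k ∧ 2 * n * r ≤ k ∧ k < 2 * n * (r + 1) := by
  have hc := card_filter_tie_lt I i j r
  rw [Nat.mul_succ]
  rcases hx with rfl | rfl <;>
    simp only [translate, h, Option.map_some, Option.some.injEq, exists_eq_left'] <;> omega

theorem translate_mPref {i j j' : Fin n} (h : I.mPref i j j') {x y : Fin n ⊕ Fin n}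
    (hx : x = Sum.inl j ∨ x = Sum.inr j) (hy : y = Sum.inl j' ∨ y = Sum.inr j') :
    (translate I).mPref (Sum.inl i) x y := by
  obtain ⟨r, r', hr, hr', hlt⟩ := h
  obtain ⟨k, hk, -, hk_lt⟩ := translate_mpref_inl_mem_block I hr hx
  obtain ⟨k', hk', hk'_ge, -⟩ := translate_mpref_inl_mem_block I hr' hy
  exact ⟨k, k', hk, hk', hk_lt.trans_le ((Nat.mul_le_mul_left _ hlt).trans hk'_ge)⟩

variable {I}

theorem translate_mAcc_inl {i j : Fin n} {x : Fin n ⊕ Fin n}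
    (hx : x = Sum.inl j ∨ x = Sum.inr j) : (translate I).mAcc (Sum.inl i) x ↔ I.mAcc i j := by
  rcases hx with rfl | rfl <;> simp [mAcc, translate]

@[simp]
theorem translate_mAcc_inr_inl {i j : Fin n} :
    (translate I).mAcc (Sum.inr i) (Sum.inl j) ↔ j = i := by
  simp [mAcc, translate]

@[simp]
theorem translate_mAcc_inr_inr {i j : Fin n} :
    (translate I).mAcc (Sum.inr i) (Sum.inr j) ↔ j = i := by
  simp [mAcc, translate]

theorem translate_wAcc_inl {i j : Fin n} {x : Fin n ⊕ Fin n}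
    (hx : x = Sum.inl j ∨ x = Sum.inr j) : (translate I).wAcc x (Sum.inl i) ↔ I.wAcc j i := by
  rcases hx with rfl | rfl <;> simp [wAcc, translate]

@[simp]
theorem translate_wAcc_inl_inr {i j : Fin n} :
    (translate I).wAcc (Sum.inl j) (Sum.inr i) ↔ i = j := by
  simp [wAcc, translate]

@[simp]
theorem translate_wAcc_inr_inr {i j : Fin n} :
    (translate I).wAcc (Sum.inr j) (Sum.inr i) ↔ i = j := by
  simp [wAcc, translate]

theorem translate_wPref_inl {j i i' : Fin n} {x : Fin n ⊕ Fin n}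
    (hx : x = Sum.inl j ∨ x = Sum.inr j) (h : I.wPref j i i') :
    (translate I).wPref x (Sum.inl i) (Sum.inl i') := by
  obtain ⟨r, r', hr, hr', hlt⟩ := h
  rcases hx with rfl | rfl
  · exact ⟨r, r', hr, hr', hlt⟩
  · exact ⟨r + 1, r' + 1, by simp [translate, hr], by simp [translate, hr'], by omega⟩

theorem translate_wPref_inr_self {i j : Fin n} (h : I.wAcc j i) :
    (translate I).wPref (Sum.inr j) (Sum.inr j) (Sum.inl i) := by
  obtain ⟨r, hr⟩ := Option.isSome_iff_exists.mp h
  exact ⟨0, r + 1, by simp [translate], by simp [translate, hr], by omega⟩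

theorem mem_projectM {M' : Finset ((Fin n ⊕ Fin n) × (Fin n ⊕ Fin n))} {i j : Fin n} :
    (i, j) ∈ projectM M' ↔ ∃ x, (x = Sum.inl j ∨ x = Sum.inr j) ∧ (Sum.inl i, x) ∈ M' := by
  simp [projectM]

end Translate

section StableTranslate

variable {n : ℕ} {I : SMInst (Fin n) (Fin n)} {M' : Finset ((Fin n ⊕ Fin n) × (Fin n ⊕ Fin n))}

theorem IsMatching.eq_of_inr_mem {i : Fin n} {x : Fin n ⊕ Fin n}
    (hM' : (translate I).IsMatching M') (h : (Sum.inr i, x) ∈ M') :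
    x = Sum.inl i ∨ x = Sum.inr i := by
  have := (hM'.1 _ h).1
  rcases x with j | j <;> simp_all

theorem IsMatching.eq_of_inr_mem_inr {i j : Fin n}
    (hM' : (translate I).IsMatching M') (h : (Sum.inr i, Sum.inr j) ∈ M') : i = j :=
  translate_wAcc_inr_inr.mp (hM'.1 _ h).2

theorem IsStable.inr_inr_mem_of_inl_inl_mem {i j : Fin n}
    (hM' : (translate I).IsStable M') (h : (Sum.inl i, Sum.inl j) ∈ M') :
    (Sum.inr j, Sum.inr j) ∈ M' := by
  by_contra hbt
  have hb_single : mSingle M' (Sum.inr j) := by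
    intro x hx
    rcases hM'.1.eq_of_inr_mem hx with rfl | rfl
    · cases hM'.1.eq_of_mem_right h hx
    · exact hbt hx
  have ht : (translate I).wDesires M' (Sum.inr j) (Sum.inr j) := by
    by_cases ht_matched : ∃ y, (y, Sum.inr j) ∈ M'
    · obtain ⟨y | k, hy⟩ := ht_matched
      · exact Or.inr ⟨_, hy, translate_wPref_inr_self
          ((translate_wAcc_inl (Or.inr rfl)).mp (hM'.1.1 _ hy).2)⟩
      · obtain rfl := hM'.1.eq_of_inr_mem_inr hy
        exact absurd hy hbt
    · exact Or.inl fun y hy => ht_matched ⟨y, hy⟩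
  exact hM'.2 _ _ ⟨by simp, by simp, Or.inl hb_single, ht⟩

theorem IsStable.isMatching_projectM (hM' : (translate I).IsStable M') :
    I.IsMatching (projectM M') := by
  have hM := hM'.1
  refine ⟨?_, ?_, ?_⟩
  · rintro ⟨i, j⟩ hij
    obtain ⟨x, hx, hmem⟩ := mem_projectM.mp hij
    exact ⟨(translate_mAcc_inl hx).mp (hM.1 _ hmem).1, (translate_wAcc_inl hx).mp (hM.1 _ hmem).2⟩
  · rintro ⟨i, j⟩ hp ⟨i', j'⟩ hq (rfl : i = i')
    obtain ⟨x, rfl | rfl, hx⟩ := mem_projectM.mp hp <;>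
      obtain ⟨y, rfl | rfl, hy⟩ := mem_projectM.mp hq <;>
      cases hM.eq_of_mem_left hx hy <;> rfl
  · rintro ⟨i, j⟩ hp ⟨i', j'⟩ hq (rfl : j = j')
    obtain ⟨x, rfl | rfl, hx⟩ := mem_projectM.mp hp <;>
      obtain ⟨y, rfl | rfl, hy⟩ := mem_projectM.mp hq
    · cases hM.eq_of_mem_right hx hy; rfl
    · cases hM.eq_of_mem_right (hM'.inr_inr_mem_of_inl_inl_mem hx) hy
    · cases hM.eq_of_mem_right (hM'.inr_inr_mem_of_inl_inl_mem hy) hx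
    · cases hM.eq_of_mem_right hx hy; rfl

theorem translate_mDesires {m w : Fin n} {x : Fin n ⊕ Fin n}
    (hx : x = Sum.inl w ∨ x = Sum.inr w) (h : I.mDesires (projectM M') m w) :
    (translate I).mDesires M' (Sum.inl m) x := by
  rcases h with hm | ⟨w', hw', hpref⟩
  · refine Or.inl fun y hy => ?_
    obtain ⟨j, hj⟩ : ∃ j, y = Sum.inl j ∨ y = Sum.inr j := by
      rcases y with j | j <;> exact ⟨j, by simp⟩
    exact hm j (mem_projectM.mpr ⟨y, hj, hy⟩)
  · obtain ⟨y, hy, hmem⟩ := mem_projectM.mp hw'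
    exact Or.inr ⟨y, hmem, translate_mPref I hpref hx hy⟩

theorem IsMatching.exists_translate_wDesires (hM : (translate I).IsMatching M') {m w : Fin n}
    (h : I.wDesires (projectM M') w m) :
    ∃ x, (x = Sum.inl w ∨ x = Sum.inr w) ∧ (translate I).wDesires M' x (Sum.inl m) := by
  rcases h with hw | ⟨m', hm', hpref⟩
  · by_cases ht : wSingle M' (Sum.inr w)
    · exact ⟨_, Or.inr rfl, Or.inl ht⟩
    refine ⟨_, Or.inl rfl, Or.inl fun y hy => ?_⟩
    obtain ⟨z, hz⟩ := not_forall_not.mp ht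
    rcases y with k | k
    · exact hw k (mem_projectM.mpr ⟨_, Or.inl rfl, hy⟩)
    rcases z with k' | k'
    · exact hw k' (mem_projectM.mpr ⟨_, Or.inr rfl, hz⟩)
    obtain rfl := hM.eq_of_inr_mem_inr hz
    obtain rfl := translate_wAcc_inl_inr.mp (hM.1 _ hy).2
    cases hM.eq_of_mem_left hy hz
  · obtain ⟨x, hx, hmem⟩ := mem_projectM.mp hm'
    exact ⟨x, hx, Or.inr ⟨_, hmem, translate_wPref_inl hx hpref⟩⟩

theorem IsMatching.exists_translate_blocks (hM : (translate I).IsMatching M') {m w : Fin n}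
    (h : I.Blocks (projectM M') m w) : ∃ x, (translate I).Blocks M' (Sum.inl m) x := by
  obtain ⟨hm_acc, hw_acc, hm, hw⟩ := h
  obtain ⟨x, hx, hwx⟩ := hM.exists_translate_wDesires hw
  exact ⟨x, (translate_mAcc_inl hx).mpr hm_acc, (translate_wAcc_inl hx).mpr hw_acc,
    translate_mDesires hx hm, hwx⟩

end StableTranslate

end SMInst

theorem projection_is_stable_general {n : ℕ}
    (I : SMInst (Fin n) (Fin n))
    (M' : Finset ((Fin n ⊕ Fin n) × (Fin n ⊕ Fin n)))
    (hM' : (SMInst.translate I).IsStable M') :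
    I.IsStable (SMInst.projectM M') :=
  ⟨hM'.isMatching_projectM, fun _ _ hblock =>
    let ⟨_, hx⟩ := hM'.1.exists_translate_blocks hblock
    hM'.2 _ _ hx⟩

/-- The projection of a stable matching of the translated instance is a (weakly)
stable matching of the original SMTI-1TM instance. -/
theorem projection_is_stable {n : ℕ}
    (I : SMInst (Fin n) (Fin n)) (h1tm : I.OneTM)
    (M' : Finset ((Fin n ⊕ Fin n) × (Fin n ⊕ Fin n)))
    (hM' : (SMInst.translate I).IsStable M') :
    I.IsStable (SMInst.projectM M') :=
  projection_is_stable_general I M' hM'
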